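/- arXiv:1505.00734 — 5 statements merged into one kernel-verified Lean document; each statement's English description precedes it below -/
import Mathlib

section
/- Let P be a path of length ℓ with edge set E, let α ≥ 1/ℓ be a real number, and let B ⊆ E be a set of edges with |B| ≤ αℓ. Let Q be the graph obtained from P by deleting all edges in B. Then there exist pairwise vertex-disjoint subpaths {Q^j}_{j∈J} of Q such that each Q^j has length at least 1/(3α) and the subpaths {Q^j}_{j∈J} together cover at least (1/3 − α)·ℓ vertices of P. -/
/-- `DisjointPathsCover G ℓ m` : `G` contains a collection of pairwise vertex-disjoint
paths, each of length at least `ℓ`, whose union covers at least `m` vertices. -/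
def DisjointPathsCover {V : Type*} (G : SimpleGraph V) (ℓ m : ℝ) : Prop :=
  ∃ (k : ℕ) (a b : Fin k → V) (P : ∀ i, G.Walk (a i) (b i)),
    (∀ i, (P i).IsPath) ∧
    (∀ i, ℓ ≤ ((P i).length : ℝ)) ∧
    (∀ i j, i ≠ j → ∀ x, x ∈ (P i).support → x ∉ (P j).support) ∧
    m ≤ (∑ i, ((P i).support.length : ℝ))

/-- The graph consisting of the edges of the path `P` with the edges in `B` deleted. -/
def pathMinus {V : Type*} {G : SimpleGraph V} {u v : V} (P : G.Walk u v)
    (B : Finset (Sym2 V)) : SimpleGraph V where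
  Adj x y := s(x, y) ∈ P.edges ∧ s(x, y) ∉ B
  symm := ⟨fun x y ⟨h1, h2⟩ => ⟨by rwa [Sym2.eq_swap], by rwa [Sym2.eq_swap]⟩⟩
  loopless := ⟨fun x ⟨h, _⟩ => (G.ne_of_adj (P.adj_of_mem_edges h)) rfl⟩

/-! Deleting the edges of `B` cuts `P` into at most `|B| + 1` consecutive segments which
together contain all `ℓ + 1` vertices of `P`. A segment shorter than `1/(3α)` has fewer than
`1/(3α) + 1` vertices, so the short segments cover at most
`(αℓ + 1)(1/(3α) + 1) = ℓ/3 + αℓ + 1/(3α) + 1` vertices; as `αℓ ≥ 1` gives `1/(3α) ≤ ℓ/3`,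
the long segments cover at least `(1/3 - α)ℓ` vertices. -/

open SimpleGraph

lemma List.countP_mem_le_card {α : Type*} [DecidableEq α] {l : List α} (hl : l.Nodup)
    (s : Finset α) : l.countP (· ∈ s) ≤ s.card := by
  rw [List.countP_eq_length_filter, ← List.toFinset_card_of_nodup (hl.filter _)]
  exact Finset.card_le_card fun x hx => by
    simpa using (List.mem_filter.mp (List.mem_toFinset.mp hx)).2

lemma List.sum_map_le_sum_map_filter_add {ι M : Type*} [AddCommMonoid M] [PartialOrder M]
    [IsOrderedAddMonoid M] (l : List ι) (f : ι → M) (p : ι → Prop) [DecidablePred p] {c : M}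
    (hc : 0 ≤ c) (h : ∀ i ∈ l, ¬p i → f i ≤ c) :
    (l.map f).sum ≤ ((l.filter (p ·)).map f).sum + l.length • c := by
  rw [← List.sum_map_filter_add_sum_map_filter_not p f l]
  gcongr
  calc ((l.filter (¬p ·)).map f).sum
      ≤ ((l.filter (¬p ·)).map f).length • c :=
        List.sum_le_card_nsmul _ _ (by
          simp only [List.mem_map, List.mem_filter, decide_eq_true_eq]
          rintro _ ⟨i, ⟨hi, hpi⟩, rfl⟩
          exact h i hi hpi)
    _ ≤ l.length • c := by
        rw [List.length_map]
        exact nsmul_le_nsmul_left hc (List.length_filter_le _ _)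

namespace SimpleGraph.Walk

variable {V : Type*} [DecidableEq V] {G H : SimpleGraph V} (B : Finset (Sym2 V))

-- `r` is the segment still open at `u`: it grows along `P` until an edge of `B` closes it.
lemma exists_segments_of_prefix {u v : V} (P : G.Walk u v)
    (hH : ∀ x y, s(x, y) ∈ P.edges → s(x, y) ∉ B → H.Adj x y) {x : V} (r : H.Walk x u) :
    ∃ L : List (Σ x y : V, H.Walk x y),
      (L.map (·.2.2.support)).flatten = r.support ++ P.support.tail ∧
      L.length ≤ P.edges.countP (· ∈ B) + 1 := by
  induction P generalizing x with
  | nil => exact ⟨[⟨x, _, r⟩], by simp⟩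
  | @cons u w v h q ih =>
    have hH' : ∀ x y, s(x, y) ∈ q.edges → s(x, y) ∉ B → H.Adj x y :=
      fun x y he => hH x y (List.mem_cons_of_mem _ he)
    by_cases hB : s(u, w) ∈ B
    · obtain ⟨L, hL, hlen⟩ := ih hH' (nil : H.Walk w w)
      refine ⟨⟨x, u, r⟩ :: L, ?_, ?_⟩
      · simp [hL]
      · simpa [hB] using hlen
    · obtain ⟨L, hL, hlen⟩ := ih hH' (r.concat (hH u w (by simp) hB))
      refine ⟨L, ?_, ?_⟩
      · simp [hL]
      · simpa [hB] using hlen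

lemma exists_segments {u v : V} (P : G.Walk u v)
    (hH : ∀ x y, s(x, y) ∈ P.edges → s(x, y) ∉ B → H.Adj x y) :
    ∃ L : List (Σ x y : V, H.Walk x y),
      (L.map (·.2.2.support)).flatten = P.support ∧
      L.length ≤ P.edges.countP (· ∈ B) + 1 := by
  simpa using exists_segments_of_prefix B P hH (nil : H.Walk u u)

end SimpleGraph.Walk

lemma disjointPathsCover_of_nonpos {V : Type*} (G : SimpleGraph V) (ℓ : ℝ) {m : ℝ}
    (hm : m ≤ 0) : DisjointPathsCover G ℓ m :=
  ⟨0, Fin.elim0, Fin.elim0, fun i => i.elim0, fun i => i.elim0, fun i => i.elim0,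
    fun i => i.elim0, by simpa using hm⟩

lemma disjointPathsCover_of_list {V : Type*} {H : SimpleGraph V} {ℓ m : ℝ}
    (K : List (Σ x y : V, H.Walk x y)) (hK : (K.map (·.2.2.support)).flatten.Nodup)
    (hlen : ∀ s ∈ K, ℓ ≤ s.2.2.length)
    (hm : m ≤ (K.map fun s => (s.2.2.support.length : ℝ)).sum) :
    DisjointPathsCover H ℓ m := by
  obtain ⟨hnodup, hdisj⟩ := List.nodup_flatten.mp hK
  rw [List.pairwise_map] at hdisj
  refine ⟨K.length, fun i => K[i].1, fun i => K[i].2.1, fun i => K[i].2.2, fun i => ?_,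
    fun i => hlen _ (K.getElem_mem _), fun i j hij x hi hj => ?_, ?_⟩
  · exact (Walk.isPath_def _).mpr (hnodup _ (List.mem_map_of_mem (K.getElem_mem _)))
  · rcases lt_or_gt_of_ne hij with h | h
    · exact List.pairwise_iff_getElem.mp hdisj i j _ _ h hi hj
    · exact List.pairwise_iff_getElem.mp hdisj j i _ _ h hj hi
  · exact hm.trans_eq (Fin.sum_univ_fun_getElem K fun s => (s.2.2.support.length : ℝ)).symm

lemma sum_length_support_sub_le_sum_filter {V : Type*} {H : SimpleGraph V}
    (L : List (Σ x y : V, H.Walk x y)) {t : ℝ} (ht : 0 ≤ t) :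
    (L.map fun s => (s.2.2.support.length : ℝ)).sum - L.length * (t + 1) ≤
      ((L.filter fun s => t ≤ s.2.2.length).map fun s => (s.2.2.support.length : ℝ)).sum := by
  have := List.sum_map_le_sum_map_filter_add L (fun s => (s.2.2.support.length : ℝ))
    (fun s => t ≤ s.2.2.length) (c := t + 1) (by positivity)
    (fun s _ hs => by rw [Walk.length_support]; push_cast; linarith [not_le.mp hs])
  rw [nsmul_eq_mul] at this
  linarith

lemma le_sub_mul_of_one_le_mul {α ℓ : ℝ} (hα : 0 < α) (hαℓ : 1 ≤ α * ℓ) :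
    (1 / 3 - α) * ℓ ≤ (ℓ + 1) - (α * ℓ + 1) * (1 / (3 * α) + 1) := by
  have h : 1 / (3 * α) ≤ ℓ / 3 := by
    rw [div_le_div_iff₀ (by positivity) (by norm_num)]
    linarith
  have h' : α * ℓ * (1 / (3 * α)) = ℓ / 3 := by field_simp
  nlinarith

theorem disjoint_subpaths_after_edge_deletion_general {V : Type*} (G : SimpleGraph V)
    (ℓ : ℕ) (α : ℝ) (u v : V) (P : G.Walk u v) (hP : P.IsPath) (hlen : P.length = ℓ)
    (hα : 1 / (ℓ : ℝ) ≤ α) (B : Finset (Sym2 V))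
    (hBcard : (B.card : ℝ) ≤ α * ℓ) :
    DisjointPathsCover (pathMinus P B) (1 / (3 * α)) ((1 / 3 - α) * ℓ) := by
  classical
  by_cases htriv : (1 / 3 - α) * ℓ ≤ 0
  · exact disjointPathsCover_of_nonpos _ _ htriv
  have hℓ : (0 : ℝ) < ℓ := Nat.cast_pos.mpr (Nat.pos_of_ne_zero fun h => htriv (by simp [h]))
  have hαℓ : 1 ≤ α * ℓ := by rwa [div_le_iff₀ hℓ] at hα
  have hα0 : 0 < α := pos_of_mul_pos_left (by linarith) hℓ.le
  obtain ⟨L, hL, hcount⟩ := P.exists_segments (H := pathMinus P B) B fun _ _ => And.intro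
  have hnum : (L.length : ℝ) ≤ α * ℓ + 1 := by
    have : L.length ≤ B.card + 1 :=
      hcount.trans (Nat.add_le_add_right (List.countP_mem_le_card hP.isTrail.edges_nodup B) 1)
    have : (L.length : ℝ) ≤ B.card + 1 := by exact_mod_cast this
    linarith
  have htotal : (L.map fun s => (s.2.2.support.length : ℝ)).sum = ℓ + 1 := by
    simpa [Nat.cast_list_sum, Function.comp_def, hlen] using
      congrArg (fun l => (l.length : ℝ)) hL
  refine disjointPathsCover_of_list (L.filter fun s => 1 / (3 * α) ≤ s.2.2.length)
    ((L.filter_sublist.map _).flatten.nodup (hL ▸ hP.support_nodup))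
    (fun s hs => by simpa using (List.mem_filter.mp hs).2) ?_
  calc (1 / 3 - α) * ℓ ≤ (ℓ + 1) - (α * ℓ + 1) * (1 / (3 * α) + 1) :=
        le_sub_mul_of_one_le_mul hα0 hαℓ
    _ ≤ (ℓ + 1) - L.length * (1 / (3 * α) + 1) := by gcongr
    _ ≤ _ := htotal ▸ sum_length_support_sub_le_sum_filter L (by positivity)

/-- **Lemma (long subpaths after edge deletion).** Let `P` be a path of length `ℓ` and
`B ⊆ E(P)` with `|B| ≤ αℓ`, where `α ≥ 1/ℓ`.  Then the graph `Q` obtained from `P` by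
deleting the edges of `B` contains pairwise vertex-disjoint subpaths, each of length at
least `1/(3α)`, covering at least `(1/3 − α)ℓ` vertices of `P`. -/
theorem disjoint_subpaths_after_edge_deletion {V : Type*} (G : SimpleGraph V)
    (ℓ : ℕ) (α : ℝ) (u v : V) (P : G.Walk u v) (hP : P.IsPath) (hlen : P.length = ℓ)
    (hα : 1 / (ℓ : ℝ) ≤ α) (B : Finset (Sym2 V)) (hBsub : ∀ e ∈ B, e ∈ P.edges)
    (hBcard : (B.card : ℝ) ≤ α * ℓ) :
    DisjointPathsCover (pathMinus P B) (1 / (3 * α)) ((1 / 3 - α) * ℓ) :=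
  disjoint_subpaths_after_edge_deletion_general G ℓ α u v P hP hlen hα B hBcard
end

section
/- There exist constants C > 0 and ε₀ > 0 such that for every ε ∈ (0, ε₀), setting ℓ = (C/ε)·ln(1/ε) and t₀ = (15/ε²)·ln(1/ε), one has ∑_{t integer, ℓ ≤ t ≤ t₀} p_{t,ℓ} ≤ ε³. -/
/-!
A tree on `t` vertices containing a path `v₀ v₁ ⋯ v_L` is determined by the sequence `(vᵢ)` together
with the parents, towards the root `v₀`, of the `t - L - 1` other vertices. Hence at most
`t (t-1) ⋯ (t-L) · t^(t-L-1) ≤ t^t e^(-L²/(2t))` trees contain such a path, that is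
`p_{t,ℓ} ≤ t² e^(-ℓ²/(2t))`. With `C = 30` and `t ≤ t₀` every term is at most
`t₀² e^(-ℓ²/(2t₀)) = t₀² ε³⁰`, and there are at most `t₀ + 1 ≤ 16 ε⁻³` terms.
-/

/-- `HasLongPath G ℓ` : `G` contains a path of length at least `ℓ`. -/
def HasLongPath {V : Type*} (G : SimpleGraph V) (ℓ : ℝ) : Prop :=
  ∃ (a b : V) (P : G.Walk a b), P.IsPath ∧ ℓ ≤ (P.length : ℝ)

/-- `pTree t ℓ` : the proportion, among the `t^(t-2)` labeled trees on `{1,…,t}`, of those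
containing a path of length at least `ℓ`. -/
noncomputable def pTree (t : ℕ) (ℓ : ℝ) : ℝ :=
  (Set.ncard {T : SimpleGraph (Fin t) | T.IsTree ∧ HasLongPath T ℓ} : ℝ) / (t : ℝ) ^ (t - 2)

namespace SimpleGraph

variable {V : Type*} {G : SimpleGraph V} {r : V}

open Classical in
/-- The second vertex of some path from `v` to the root `r` (or `v` itself if there is none):
in an acyclic graph this is the parent of `v` in the tree rooted at `r`. -/
noncomputable def parent (G : SimpleGraph V) (r v : V) : V :=
  if h : ∃ p : G.Walk v r, p.IsPath then h.choose.snd else v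

lemma IsAcyclic.parent_eq_snd (hG : G.IsAcyclic) {v : V} {p : G.Walk v r} (hp : p.IsPath) :
    G.parent r v = p.snd := by
  have h : ∃ p : G.Walk v r, p.IsPath := ⟨p, hp⟩
  have hq : h.choose = p :=
    congrArg Subtype.val ((hG.subsingleton_path _ _).elim ⟨_, h.choose_spec⟩ ⟨p, hp⟩)
  rw [parent, dif_pos h, hq]

lemma IsAcyclic.parent_getVert_succ (hG : G.IsAcyclic) {b : V} {p : G.Walk r b} (hp : p.IsPath)
    {i : ℕ} (hi : i < p.length) : G.parent r (p.getVert (i + 1)) = p.getVert i := by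
  rw [hG.parent_eq_snd (hp.take (i + 1)).reverse, Walk.snd, Walk.getVert_reverse,
    Walk.take_length, Walk.take_getVert]
  congr 1
  omega

lemma Connected.adj_parent (hG : G.Connected) {v : V} (hv : v ≠ r) : G.Adj v (G.parent r v) := by
  obtain ⟨p, hp⟩ := (hG v r).exists_isPath
  have h : ∃ p : G.Walk v r, p.IsPath := ⟨p, hp⟩
  rw [parent, dif_pos h]
  exact Walk.adj_snd (Walk.not_nil_of_ne hv)

lemma IsTree.adj_iff_parent (hT : G.IsTree) (r : V) {a b : V} :
    G.Adj a b ↔ (a ≠ r ∧ G.parent r a = b) ∨ (b ≠ r ∧ G.parent r b = a) := by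
  classical
  refine ⟨fun hab => ?_, ?_⟩
  · obtain ⟨q, hq⟩ := (hT.connected a r).exists_isPath
    by_cases hb : b ∈ q.support
    · -- the part of `q` up to `b` is a path from `a` to `b`, hence the edge `ab` itself
      have hqb : q.takeUntil b hb = Walk.cons hab Walk.nil := congrArg Subtype.val
        ((hT.isAcyclic.subsingleton_path _ _).elim ⟨_, hq.takeUntil hb⟩
          ⟨_, Walk.IsPath.nil.cons (by simpa using hab.ne)⟩)
      have hlen : 1 ≤ q.length := by
        simpa [hqb] using q.length_takeUntil_le_length hb
      left
      refine ⟨?_, ?_⟩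
      · rintro rfl
        have := congrArg (·.val.length) (Path.loop_eq ⟨q, hq⟩)
        simp only [Path.nil_coe, Walk.length_nil] at this
        omega
      · rw [hT.isAcyclic.parent_eq_snd hq, Walk.snd, ← Walk.getVert_takeUntil hb (by simp [hqb]),
          hqb]
        simp
    · right
      refine ⟨fun hbr => hb (hbr ▸ q.end_mem_support), ?_⟩
      rw [hT.isAcyclic.parent_eq_snd (hq.cons hb (h := hab.symm)), Walk.snd_cons]
  · rintro (⟨ha, rfl⟩ | ⟨hb, rfl⟩)
    · exact hT.connected.adj_parent ha
    · exact (hT.connected.adj_parent hb).symm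

lemma IsTree.ext_of_parent {T T' : SimpleGraph V} (hT : T.IsTree) (hT' : T'.IsTree)
    (h : ∀ v, v ≠ r → T.parent r v = T'.parent r v) : T = T' := by
  ext a b
  rw [hT.adj_iff_parent r, hT'.adj_iff_parent r]
  constructor <;> rintro (⟨ha, hab⟩ | ⟨hb, hba⟩)
  exacts [.inl ⟨ha, (h a ha).symm.trans hab⟩, .inr ⟨hb, (h b hb).symm.trans hba⟩,
    .inl ⟨ha, (h a ha).trans hab⟩, .inr ⟨hb, (h b hb).trans hba⟩]

end SimpleGraph

section Counting

open SimpleGraph Fintype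

variable {V : Type*}

-- The trees containing the path `f 0 – f 1 – ⋯ – f L`, described through parents towards `f 0`.
def treesAlong {L : ℕ} (f : Fin (L + 1) ↪ V) : Set (SimpleGraph V) :=
  {T | T.IsTree ∧ ∀ i : Fin L, T.parent (f 0) (f i.succ) = f i.castSucc}

lemma ncard_treesAlong_le [Fintype V] {L : ℕ} (f : Fin (L + 1) ↪ V) :
    (treesAlong f).ncard ≤ card V ^ (card V - (L + 1)) := by
  classical
  have hinj : Set.InjOn (fun T : SimpleGraph V => fun v : {v // v ∉ Set.range f} => T.parent (f 0) v)
      (treesAlong f) := by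
    rintro T ⟨hT, hTf⟩ T' ⟨hT', hT'f⟩ hTT'
    refine hT.ext_of_parent (r := f 0) hT' fun v hv => ?_
    by_cases hvf : v ∈ Set.range f
    · obtain ⟨j, rfl⟩ := hvf
      obtain ⟨i, rfl⟩ := Fin.exists_succ_eq.mpr fun hj => hv (congrArg f hj)
      rw [hTf i, hT'f i]
    · exact congrFun hTT' ⟨v, hvf⟩
  calc (treesAlong f).ncard ≤ (Set.univ : Set ({v // v ∉ Set.range f} → V)).ncard :=
        Set.ncard_le_ncard_of_injOn _ (fun _ _ => trivial) hinj (Set.toFinite _)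
    _ = card V ^ (card V - (L + 1)) := by
        rw [Set.ncard_univ, Nat.card_eq_fintype_card, Fintype.card_fun, Fintype.card_subtype_compl,
          Fintype.card_range, Fintype.card_fin]

lemma setOf_isTree_hasLongPath_subset (ℓ : ℝ) :
    {T : SimpleGraph V | T.IsTree ∧ HasLongPath T ℓ} ⊆ ⋃ f : Fin (⌈ℓ⌉₊ + 1) ↪ V, treesAlong f := by
  rintro T ⟨hT, a, b, Q, hQ, hlen⟩
  have hL : ⌈ℓ⌉₊ ≤ Q.length := Nat.ceil_le.mpr hlen
  let f : Fin (⌈ℓ⌉₊ + 1) ↪ V :=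
    ⟨fun i => Q.getVert i, fun i j hij => Fin.ext (hQ.getVert_injOn
      (by simp only [Set.mem_ofPred_eq]; omega) (by simp only [Set.mem_ofPred_eq]; omega) hij)⟩
  refine Set.mem_iUnion.mpr ⟨f, hT, fun i => ?_⟩
  show T.parent (Q.getVert 0) (Q.getVert (i + 1)) = Q.getVert i
  rw [Q.getVert_zero]
  exact hT.isAcyclic.parent_getVert_succ hQ (by omega)

lemma ncard_isTree_hasLongPath_le [Fintype V] (ℓ : ℝ) :
    {T : SimpleGraph V | T.IsTree ∧ HasLongPath T ℓ}.ncard ≤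
      (card V).descFactorial (⌈ℓ⌉₊ + 1) * card V ^ (card V - (⌈ℓ⌉₊ + 1)) := by
  classical
  calc _ ≤ (⋃ f : Fin (⌈ℓ⌉₊ + 1) ↪ V, treesAlong f).ncard :=
        Set.ncard_le_ncard (setOf_isTree_hasLongPath_subset ℓ) (Set.toFinite _)
    _ ≤ ∑ f : Fin (⌈ℓ⌉₊ + 1) ↪ V, (treesAlong f).ncard := Set.ncard_iUnion_le_of_fintype _
    _ ≤ ∑ _f : Fin (⌈ℓ⌉₊ + 1) ↪ V, card V ^ (card V - (⌈ℓ⌉₊ + 1)) :=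
        Finset.sum_le_sum fun f _ => ncard_treesAlong_le f
    _ = _ := by simp [Fintype.card_embedding_eq]

end Counting

open Real Finset

lemma Nat.descFactorial_le_pow_mul_exp (n k : ℕ) :
    (n.descFactorial k : ℝ) ≤ n ^ k * exp (-(k * (k - 1) / 2) / n) := by
  have hfactor (i : ℕ) : ((n - i : ℕ) : ℝ) ≤ n * exp (-(i / n)) := by
    rcases le_or_gt i n with hin | hni
    · rcases n.eq_zero_or_pos with rfl | hn
      · simp
      calc ((n - i : ℕ) : ℝ) = n * (1 - i / n) := by push_cast [hin]; field_simp
        _ ≤ n * exp (-(i / n)) := by gcongr; exact one_sub_le_exp_neg _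
    · rw [Nat.sub_eq_zero_of_le hni.le, Nat.cast_zero]
      positivity
  have hgauss : ∑ i ∈ range k, (i : ℝ) = k * (k - 1) / 2 := by
    induction k with
    | zero => simp
    | succ k ih => rw [sum_range_succ, ih]; push_cast; ring
  calc (n.descFactorial k : ℝ) = ∏ i ∈ range k, ((n - i : ℕ) : ℝ) := by
        rw [Nat.descFactorial_eq_prod_range, Nat.cast_prod]
    _ ≤ ∏ i ∈ range k, (n * exp (-(i / n))) :=
        prod_le_prod (fun _ _ => by positivity) fun i _ => hfactor i
    _ = n ^ k * exp (-(k * (k - 1) / 2) / n) := by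
        rw [prod_mul_distrib, prod_const, card_range, ← exp_sum, ← hgauss, sum_neg_distrib,
          neg_div, sum_div]

lemma Nat.descFactorial_mul_pow_sub_le (n k : ℕ) :
    (n.descFactorial k * n ^ (n - k) : ℝ) ≤ n ^ n * exp (-(k * (k - 1) / 2) / n) := by
  rcases le_or_gt k n with hkn | hnk
  · calc (n.descFactorial k * n ^ (n - k) : ℝ)
        ≤ n ^ k * exp (-(k * (k - 1) / 2) / n) * n ^ (n - k) := by
          gcongr; exact n.descFactorial_le_pow_mul_exp k
      _ = n ^ n * exp (-(k * (k - 1) / 2) / n) := by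
          rw [mul_right_comm, ← pow_add, Nat.add_sub_cancel' hkn]
  · rw [Nat.descFactorial_eq_zero_iff_lt.mpr hnk, Nat.cast_zero, zero_mul]
    positivity

lemma pTree_le {t : ℕ} (ht : 2 ≤ t) {ℓ : ℝ} (hℓ : 0 ≤ ℓ) :
    pTree t ℓ ≤ t ^ 2 * exp (-ℓ ^ 2 / (2 * t)) := by
  set L := ⌈ℓ⌉₊
  have hℓL : ℓ ^ 2 ≤ (L + 1 : ℕ) * ((L + 1 : ℕ) - 1 : ℝ) := by
    push_cast
    nlinarith [Nat.le_ceil ℓ]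
  have hcount := ncard_isTree_hasLongPath_le (V := Fin t) ℓ
  rw [Fintype.card_fin] at hcount
  rw [pTree, div_le_iff₀ (by positivity)]
  calc (_ : ℝ) ≤ (t.descFactorial (L + 1) * t ^ (t - (L + 1)) : ℝ) := by exact_mod_cast hcount
    _ ≤ t ^ t * exp (-((L + 1 : ℕ) * ((L + 1 : ℕ) - 1 : ℝ) / 2) / t) :=
        t.descFactorial_mul_pow_sub_le (L + 1)
    _ ≤ t ^ t * exp (-ℓ ^ 2 / (2 * t)) := by
        refine mul_le_mul_of_nonneg_left (exp_le_exp.mpr ?_) (by positivity)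
        rw [neg_div, neg_div, div_div, neg_le_neg_iff]
        gcongr
    _ = t ^ 2 * exp (-ℓ ^ 2 / (2 * t)) * t ^ (t - 2) := by
        rw [mul_right_comm, ← pow_add, Nat.add_sub_cancel' ht]

lemma pTree_le_of_le {t : ℕ} (ht : 2 ≤ t) {ℓ s : ℝ} (hℓ : 0 ≤ ℓ) (hts : t ≤ s) :
    pTree t ℓ ≤ s ^ 2 * exp (-ℓ ^ 2 / (2 * s)) :=
  calc pTree t ℓ ≤ t ^ 2 * exp (-ℓ ^ 2 / (2 * t)) := pTree_le ht hℓ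
    _ ≤ s ^ 2 * exp (-ℓ ^ 2 / (2 * s)) := by
        refine mul_le_mul (by gcongr) (exp_le_exp.mpr ?_) (by positivity) (by positivity)
        rw [neg_div, neg_div, neg_le_neg_iff]
        gcongr

lemma sum_Icc_floor_le {f : ℕ → ℝ} {a : ℕ} {s B : ℝ} (hs : 0 ≤ s) (hB : 0 ≤ B)
    (hf : ∀ t ∈ Icc a ⌊s⌋₊, f t ≤ B) : ∑ t ∈ Icc a ⌊s⌋₊, f t ≤ (s + 1) * B :=
  calc ∑ t ∈ Icc a ⌊s⌋₊, f t ≤ #(Icc a ⌊s⌋₊) • B := sum_le_card_nsmul _ _ _ hf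
    _ ≤ (s + 1) * B := by
        rw [nsmul_eq_mul, Nat.card_Icc]
        gcongr
        exact (Nat.cast_le.mpr (Nat.sub_le _ _)).trans (by push_cast; linarith [Nat.floor_le hs])

lemma sum_pTree_Icc_le {ℓ s : ℝ} (hℓ : 1 < ℓ) (hs : 0 ≤ s) :
    ∑ t ∈ Icc ⌈ℓ⌉₊ ⌊s⌋₊, pTree t ℓ ≤ (s + 1) * (s ^ 2 * exp (-ℓ ^ 2 / (2 * s))) := by
  refine sum_Icc_floor_le hs (by positivity) fun t ht => ?_
  obtain ⟨hℓt, hts⟩ := mem_Icc.mp ht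
  exact pTree_le_of_le ((Nat.lt_ceil.mpr (by exact_mod_cast hℓ)).trans_le hℓt) (by positivity)
    ((Nat.le_floor_iff hs).mp hts)

/-- **Lemma (sum of tree-path proportions is small).** There exist constants `C, ε₀ > 0`
such that for every `ε ∈ (0, ε₀)`, with `ℓ = (C/ε)·ln(1/ε)` and `t₀ = (15/ε²)·ln(1/ε)`,
the sum of `p_{t,ℓ}` over all integers `t` with `ℓ ≤ t ≤ t₀` is at most `ε³`. -/
theorem sum_pTree_le :
    ∃ C > (0 : ℝ), ∃ ε₀ > (0 : ℝ), ∀ ε : ℝ, 0 < ε → ε < ε₀ →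
      ∑ t ∈ Finset.Icc ⌈(C / ε) * Real.log (1 / ε)⌉₊ ⌊(15 / ε ^ 2) * Real.log (1 / ε)⌋₊,
          pTree t ((C / ε) * Real.log (1 / ε)) ≤ ε ^ 3 := by
  refine ⟨30, by norm_num, 1 / 2, by norm_num, fun ε hε hε2 => ?_⟩
  set x := log (1 / ε)
  have hx_lo : 1 / 2 ≤ x := by
    have := one_sub_inv_le_log_of_pos (one_div_pos.mpr hε)
    rw [inv_div, div_one] at this
    linarith
  have hx_hi : x ≤ 1 / ε := (log_le_sub_one_of_pos (one_div_pos.mpr hε)).trans (by linarith)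
  set ℓ := 30 / ε * x
  set t₀ := 15 / ε ^ 2 * x
  have hℓ : 1 < ℓ := by
    have : 30 ≤ 30 / ε := by rw [le_div_iff₀ hε]; linarith
    calc (1 : ℝ) < 30 * (1 / 2) := by norm_num
      _ ≤ ℓ := by unfold ℓ; gcongr
  have ht₀ : t₀ ≤ 15 / ε ^ 3 :=
    calc t₀ ≤ 15 / ε ^ 2 * (1 / ε) := by unfold t₀; gcongr
      _ = 15 / ε ^ 3 := by field_simp
  have hexp : exp (-ℓ ^ 2 / (2 * t₀)) = ε ^ 30 := by
    rw [← exp_log (pow_pos hε 30), log_pow]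
    congr 1
    simp only [ℓ, t₀, x, one_div, log_inv]
    field_simp
    ring
  have hsmall : (15 + ε ^ 3) * 225 * ε ^ 18 ≤ 1 :=
    calc (15 + ε ^ 3) * 225 * ε ^ 18 ≤ (15 + (1 / 2) ^ 3) * 225 * (1 / 2) ^ 18 := by gcongr
      _ ≤ 1 := by norm_num
  calc _ ≤ (t₀ + 1) * (t₀ ^ 2 * ε ^ 30) := hexp ▸ sum_pTree_Icc_le hℓ (by positivity)
    _ ≤ (15 / ε ^ 3 + 1) * ((15 / ε ^ 3) ^ 2 * ε ^ 30) := by gcongr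
    _ = (15 + ε ^ 3) * 225 * ε ^ 18 * ε ^ 3 := by field_simp; ring
    _ ≤ ε ^ 3 := mul_le_of_le_one_left (by positivity) hsmall
end

section
/- Let t, a, b be positive integers with (a+1)·b ≤ t, and let f : [t] → [t] be chosen uniformly at random. Let D be the directed graph on vertex set [t] with edges i → f(i) for each i ∈ [t]. Then the probability that D contains b pairwise vertex-disjoint directed paths, each of length (at least) a, is at most t! / ((t − (a+1)b)! · b!) · (1/t)^{ab}, and moreover this quantity is at most exp( b + b·ln(t/b) − C((a+1)b, 2)/t ), where C(m,2) = m(m−1)/2 denotes the binomial coefficient. -/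
/-!
Truncating each path to length exactly `a`, a digraph with the required paths yields an
injective array `Q : [b] × [a+1] → [t]` with `f (Q j i) = Q j (i+1)`. Such an array prescribes
`f` at `ab` points, so at most `t^(t-ab)` functions follow it, while each admissible `f`
follows at least `b!` arrays (permute the rows). Double counting gives
`#{f} · b! ≤ t(t-1)⋯(t-(a+1)b+1) · t^(t-ab)`. For the exponential form, bound each factor by
`t - i ≤ t e^(-i/t)` and use `b^b / b! ≤ e^b`.
-/

/-- `HasDisjointDirPaths t a b f` : the functional digraph on `[t]` with edges `i → f i`
contains `b` pairwise vertex-disjoint directed paths, each of length at least `a`. -/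
def HasDisjointDirPaths (t a b : ℕ) (f : Fin t → Fin t) : Prop :=
  ∃ L : Fin b → ℕ, (∀ j, a ≤ L j) ∧
    ∃ P : ∀ j : Fin b, Fin (L j + 1) → Fin t,
      Function.Injective (fun q : Σ j : Fin b, Fin (L j + 1) => P q.1 q.2) ∧
      ∀ (j : Fin b) (i : Fin (L j)), f (P j i.castSucc) = P j i.succ

open Finset
open scoped Nat

section PathFamily

variable {α ι : Type*} {a : ℕ}

/-- `Q` lays out the vertex-disjoint paths `Q (j, 0) → Q (j, 1) → ⋯ → Q (j, a)` of the
functional digraph of `f`, one for each row `j`. -/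
def IsPathFamily (f : α → α) (Q : ι × Fin (a + 1) ↪ α) : Prop :=
  ∀ j (i : Fin a), f (Q (j, i.castSucc)) = Q (j, i.succ)

instance [DecidableEq α] [Fintype ι] (f : α → α) (Q : ι × Fin (a + 1) ↪ α) :
    Decidable (IsPathFamily f Q) :=
  inferInstanceAs (Decidable (∀ _, _))

def permuteRows (σ : Equiv.Perm ι) (Q : ι × Fin (a + 1) ↪ α) : ι × Fin (a + 1) ↪ α :=
  (σ.prodCongr (Equiv.refl _)).toEmbedding.trans Q

@[simp]
theorem permuteRows_apply (σ : Equiv.Perm ι) (Q : ι × Fin (a + 1) ↪ α) (j : ι) (i : Fin (a + 1)) :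
    permuteRows σ Q (j, i) = Q (σ j, i) :=
  rfl

theorem IsPathFamily.permuteRows {f : α → α} {Q : ι × Fin (a + 1) ↪ α} (hQ : IsPathFamily f Q)
    (σ : Equiv.Perm ι) : IsPathFamily f (permuteRows σ Q) :=
  fun j i => hQ (σ j) i

theorem permuteRows_left_injective (Q : ι × Fin (a + 1) ↪ α) :
    Function.Injective fun σ : Equiv.Perm ι => permuteRows σ Q := by
  intro σ τ h
  ext j
  have := Q.injective (DFunLike.congr_fun h (j, 0))
  simp_all

variable [Fintype α] [DecidableEq α] [Fintype ι]

theorem factorial_card_le_card_isPathFamily [DecidableEq ι] {f : α → α}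
    {Q : ι × Fin (a + 1) ↪ α} (hQ : IsPathFamily f Q) :
    (Fintype.card ι)! ≤ #{Q' : ι × Fin (a + 1) ↪ α | IsPathFamily f Q'} := by
  rw [← Fintype.card_perm]
  exact card_le_card_of_injOn (fun σ => permuteRows σ Q)
    (fun σ _ => by simpa using hQ.permuteRows σ)
    (permuteRows_left_injective Q).injOn

/-- A function following `Q` is determined by its values off the `a · |ι|` non-terminal
vertices of the paths. -/
theorem card_isPathFamily_le (Q : ι × Fin (a + 1) ↪ α) :
    #{f : α → α | IsPathFamily f Q} ≤
      Fintype.card α ^ (Fintype.card α - a * Fintype.card ι) := by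
  set S : Finset α := univ.image fun p : ι × Fin a => Q (p.1, p.2.castSucc)
  have hS : #S = a * Fintype.card ι := by
    rw [Finset.card_image_of_injective, Finset.card_univ, Fintype.card_prod, Fintype.card_fin,
      mul_comm]
    intro p q h
    simpa [Prod.ext_iff] using Q.injective h
  calc #{f : α → α | IsPathFamily f Q}
      ≤ #(univ : Finset (↥Sᶜ → α)) := by
        refine card_le_card_of_injOn (fun f x => f x) (fun _ _ => mem_univ _) ?_
        intro f hf g hg hfg
        funext x
        by_cases hx : x ∈ S
        · obtain ⟨p, -, rfl⟩ := mem_image.mp hx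
          rw [(mem_filter.mp hf).2, (mem_filter.mp hg).2]
        · exact congrFun hfg ⟨x, mem_compl.mpr hx⟩
    _ = Fintype.card α ^ (Fintype.card α - a * Fintype.card ι) := by
        rw [Finset.card_univ, Fintype.card_fun, Fintype.card_coe, card_compl, hS]

/-- Double counting the pairs `(f, Q)` with `Q` a path family of `f`: every admissible `f` has
at least `|ι|!` of them, every embedding `Q` at most `|α| ^ (|α| - a |ι|)`. -/
theorem card_exists_isPathFamily_mul_factorial_le [DecidableEq ι] (a : ℕ) :
    #{f : α → α | ∃ Q : ι × Fin (a + 1) ↪ α, IsPathFamily f Q} * (Fintype.card ι)! ≤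
      (Fintype.card α).descFactorial ((a + 1) * Fintype.card ι) *
        Fintype.card α ^ (Fintype.card α - a * Fintype.card ι) := by
  have hcount := card_nsmul_le_card_nsmul (s := {f : α → α | ∃ Q : ι × Fin (a + 1) ↪ α,
      IsPathFamily f Q}) (t := univ) (r := IsPathFamily) (m := (Fintype.card ι)!)
    (n := Fintype.card α ^ (Fintype.card α - a * Fintype.card ι))
    (fun f hf => by
      obtain ⟨Q, hQ⟩ := (mem_filter.mp hf).2
      simpa [bipartiteAbove] using factorial_card_le_card_isPathFamily hQ)
    (fun Q _ => (card_le_card (filter_subset_filter _ (subset_univ _))).trans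
      (card_isPathFamily_le Q))
  rwa [smul_eq_mul, smul_eq_mul, Finset.card_univ, Fintype.card_embedding_eq, Fintype.card_prod,
    Fintype.card_fin, mul_comm (Fintype.card ι)] at hcount

end PathFamily

theorem HasDisjointDirPaths.exists_isPathFamily {t a b : ℕ} {f : Fin t → Fin t}
    (hf : HasDisjointDirPaths t a b f) : ∃ Q : Fin b × Fin (a + 1) ↪ Fin t, IsPathFamily f Q := by
  obtain ⟨L, hL, P, hP, hf⟩ := hf
  let c (p : Fin b × Fin (a + 1)) : Σ j : Fin b, Fin (L j + 1) :=
    ⟨p.1, Fin.castLE (Nat.succ_le_succ (hL p.1)) p.2⟩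
  have hc : Function.Injective c := by
    rintro ⟨j, i⟩ ⟨j', i'⟩ h
    obtain ⟨rfl, h⟩ := Sigma.mk.inj_iff.mp h
    simpa [Fin.ext_iff] using h
  exact ⟨⟨_, hP.comp hc⟩, fun j i => hf j (Fin.castLE (hL j) i)⟩

theorem ncard_hasDisjointDirPaths_mul_factorial_le (t a b : ℕ) :
    {f : Fin t → Fin t | HasDisjointDirPaths t a b f}.ncard * b ! ≤
      t.descFactorial ((a + 1) * b) * t ^ (t - a * b) := by
  calc {f : Fin t → Fin t | HasDisjointDirPaths t a b f}.ncard * b !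
      ≤ #{f : Fin t → Fin t | ∃ Q : Fin b × Fin (a + 1) ↪ Fin t, IsPathFamily f Q} * b ! := by
        gcongr
        rw [← Set.ncard_coe_finset]
        exact Set.ncard_le_ncard fun f hf => by simpa using hf.exists_isPathFamily
    _ ≤ _ := by simpa using card_exists_isPathFamily_mul_factorial_le (α := Fin t) (ι := Fin b) a

theorem Real.sub_le_mul_exp_neg_div {x : ℝ} (hx : 0 < x) (y : ℝ) :
    x - y ≤ x * Real.exp (-(y / x)) :=
  calc x - y = x * (1 - y / x) := by field_simp
    _ ≤ x * Real.exp (-(y / x)) := by gcongr; exact Real.one_sub_le_exp_neg _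

theorem Nat.descFactorial_le_pow_mul_exp_s12 (t m : ℕ) :
    (t.descFactorial m : ℝ) ≤ t ^ m * Real.exp (-((m.choose 2 : ℝ) / t)) := by
  rcases lt_or_ge t m with htm | hmt
  · rw [Nat.descFactorial_eq_zero_iff_lt.mpr htm, Nat.cast_zero]
    positivity
  have hlt {i : ℕ} (hi : i ∈ range m) : i < t := (mem_range.mp hi).trans_le hmt
  have hsum : ∑ i ∈ range m, (i : ℝ) = m.choose 2 := by
    rw [Nat.choose_two_right, ← sum_range_id]
    push_cast
    rfl
  calc (t.descFactorial m : ℝ) = ∏ i ∈ range m, ((t : ℝ) - i) := by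
        rw [Nat.descFactorial_eq_prod_range]
        push_cast
        exact prod_congr rfl fun i hi => Nat.cast_sub (hlt hi).le
    _ ≤ ∏ i ∈ range m, ((t : ℝ) * Real.exp (-((i : ℝ) / t))) := by
        refine prod_le_prod (fun i hi => ?_) fun i hi => ?_
        · exact sub_nonneg.mpr (by exact_mod_cast (hlt hi).le)
        · have ht : (0 : ℝ) < t := by exact_mod_cast (Nat.zero_le i).trans_lt (hlt hi)
          exact Real.sub_le_mul_exp_neg_div ht _
    _ = t ^ m * Real.exp (-((m.choose 2 : ℝ) / t)) := by
        rw [prod_mul_distrib, prod_const, card_range, ← Real.exp_sum, ← hsum, sum_div,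
          sum_neg_distrib]

theorem Real.pow_div_factorial_le_exp_add_mul_log {x : ℝ} (hx : 0 < x) (n : ℕ) :
    x ^ n / n ! ≤ Real.exp (n + n * Real.log (x / n)) := by
  rcases n.eq_zero_or_pos with rfl | hn
  · simp
  have hn' : (0 : ℝ) < n := by exact_mod_cast hn
  calc x ^ n / n ! = (x / n) ^ n * ((n : ℝ) ^ n / n !) := by
        rw [div_pow]
        field_simp
    _ ≤ (x / n) ^ n * Real.exp n := by gcongr; exact Real.pow_div_factorial_le_exp _ hn'.le n
    _ = Real.exp (n + n * Real.log (x / n)) := by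
        rw [Real.exp_add, Real.exp_nat_mul, Real.exp_log (by positivity), mul_comm]

theorem random_functional_digraph_disjoint_paths_general (t a b : ℕ)
    (ht : 0 < t) (htab : (a + 1) * b ≤ t) :
    (Set.ncard {f : Fin t → Fin t | HasDisjointDirPaths t a b f} : ℝ) / (t : ℝ) ^ t
        ≤ (t.factorial : ℝ) / (((t - (a + 1) * b).factorial : ℝ) * (b.factorial : ℝ)) *
            (1 / (t : ℝ)) ^ (a * b) ∧
      (t.factorial : ℝ) / (((t - (a + 1) * b).factorial : ℝ) * (b.factorial : ℝ)) *
            (1 / (t : ℝ)) ^ (a * b)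
        ≤ Real.exp ((b : ℝ) + (b : ℝ) * Real.log ((t : ℝ) / (b : ℝ)) -
            ((((a + 1) * b).choose 2 : ℝ)) / (t : ℝ)) := by
  have hab : a * b ≤ t := (Nat.mul_le_mul_right b a.le_succ).trans htab
  have ht' : (0 : ℝ) < t := by exact_mod_cast ht
  have hbound : (t ! : ℝ) / ((t - (a + 1) * b)! * b !) * (1 / (t : ℝ)) ^ (a * b) =
      t.descFactorial ((a + 1) * b) / (b ! * (t : ℝ) ^ (a * b)) := by
    rw [← Nat.factorial_mul_descFactorial htab]
    push_cast
    rw [one_div, inv_pow]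
    field_simp
  rw [hbound]
  constructor
  · rw [div_le_div_iff₀ (by positivity) (by positivity)]
    have hcount : ({f | HasDisjointDirPaths t a b f}.ncard * b ! : ℝ) ≤
        t.descFactorial ((a + 1) * b) * (t : ℝ) ^ (t - a * b) := by
      exact_mod_cast ncard_hasDisjointDirPaths_mul_factorial_le t a b
    calc _ = ({f | HasDisjointDirPaths t a b f}.ncard * b ! : ℝ) * (t : ℝ) ^ (a * b) := by ring
      _ ≤ t.descFactorial ((a + 1) * b) * (t : ℝ) ^ (t - a * b) * (t : ℝ) ^ (a * b) := by gcongr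
      _ = _ := by rw [mul_assoc, ← pow_add, Nat.sub_add_cancel hab]
  · calc _ ≤ (t : ℝ) ^ ((a + 1) * b) * Real.exp (-(((a + 1) * b).choose 2 / t))
          / (b ! * (t : ℝ) ^ (a * b)) := by gcongr; exact Nat.descFactorial_le_pow_mul_exp_s12 _ _
      _ = (t : ℝ) ^ b / b ! * Real.exp (-(((a + 1) * b).choose 2 / t)) := by
          rw [add_one_mul, pow_add]
          field_simp
      _ ≤ Real.exp (b + b * Real.log (t / b)) * Real.exp (-(((a + 1) * b).choose 2 / t)) := by
          gcongr
          exact Real.pow_div_factorial_le_exp_add_mul_log ht' b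
      _ = _ := by rw [← Real.exp_add, ← sub_eq_add_neg]

/-- **Lemma (disjoint directed paths in a random functional digraph).** For a uniformly
random `f : [t] → [t]`, the probability that the digraph `i → f(i)` contains `b` pairwise
vertex-disjoint directed paths, each of length at least `a`, is at most
`t!/((t−(a+1)b)!·b!)·(1/t)^{ab}`, which in turn is at most
`exp(b + b·ln(t/b) − C((a+1)b, 2)/t)`. -/
theorem random_functional_digraph_disjoint_paths (t a b : ℕ)
    (ht : 0 < t) (ha : 0 < a) (hb : 0 < b) (htab : (a + 1) * b ≤ t) :
    (Set.ncard {f : Fin t → Fin t | HasDisjointDirPaths t a b f} : ℝ) / (t : ℝ) ^ t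
        ≤ (t.factorial : ℝ) / (((t - (a + 1) * b).factorial : ℝ) * (b.factorial : ℝ)) *
            (1 / (t : ℝ)) ^ (a * b) ∧
      (t.factorial : ℝ) / (((t - (a + 1) * b).factorial : ℝ) * (b.factorial : ℝ)) *
            (1 / (t : ℝ)) ^ (a * b)
        ≤ Real.exp ((b : ℝ) + (b : ℝ) * Real.log ((t : ℝ) / (b : ℝ)) -
            ((((a + 1) * b).choose 2 : ℝ)) / (t : ℝ)) :=
  random_functional_digraph_disjoint_paths_general t a b ht htab
end

section
/- Let G ~ 𝒢(n,p), let S ⊆ [n] be a fixed set of size t, and let ℓ ≥ 1. Then the probability that the induced subgraph G[S] is connected and contains a path of length at least ℓ, and that there are no edges of G between S and [n] \ S, is at most p_{t,ℓ} · t^{t−2} · p^{t−1} · (1−p)^{t(n−t)}. -/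
open MeasureTheory

/-- The binomial random graph measure `𝒢(n,p)`: product of Bernoulli(p) measures over
pairs of vertices (the probability is clamped at 1, which is irrelevant for large `n`). -/
noncomputable def gnp (n : ℕ) (p : ℝ) : Measure (Sym2 (Fin n) → Bool) :=
  Measure.pi fun _ => (PMF.bernoulli (min (Real.toNNReal p) 1) (min_le_right _ _)).toMeasure

/-- The graph on `[n]` determined by an outcome `ω` of the edge coin flips. -/
def graphOf {n : ℕ} (ω : Sym2 (Fin n) → Bool) : SimpleGraph (Fin n) where
  Adj v w := v ≠ w ∧ ω s(v, w) = true
  symm := ⟨fun v w ⟨h1, h2⟩ => ⟨h1.symm, by rwa [Sym2.eq_swap]⟩⟩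
  loopless := ⟨fun v ⟨h, _⟩ => h rfl⟩

/-!
Union bound over spanning trees. If `G[S]` is connected and contains a long path, that path
(an acyclic subgraph) extends to a spanning tree `T` of `G[S]`, which is then a labelled tree on
`S` with a long path. For a fixed `T` the event "all `t - 1` edges of `T` are present and all
`t (n - t)` pairs between `S` and its complement are absent" fixes distinct independent coins,
so it has probability `p ^ (t - 1) * (1 - p) ^ (t (n - t))`; there are `p_{t,ℓ} t ^ (t - 2)`
such trees.
-/

open SimpleGraph Finset

section

variable {V W : Type*} {G : SimpleGraph V}

lemma SimpleGraph.Walk.IsPath.isAcyclic_fromEdgeSet_edges {u v : V} {P : G.Walk u v}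
    (hP : P.IsPath) : (fromEdgeSet {e | e ∈ P.edges}).IsAcyclic := by
  induction P with
  | nil => simp
  | @cons u v w h P ih =>
    rw [Walk.cons_isPath_iff] at hP
    -- `u` is off the rest of the path, hence isolated, so the new edge joins two components.
    have hu : ∀ x, ¬ (fromEdgeSet {e | e ∈ P.edges}).Adj u x := fun x hx =>
      hP.2 (P.fst_mem_support_of_mem_edges hx.1)
    have hnreach : ¬ (fromEdgeSet {e | e ∈ P.edges}).Reachable u v := by
      rintro ⟨q⟩
      cases q with
      | nil => exact h.ne rfl
      | cons ha _ => exact hu _ ha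
    have := (ih hP.1).sup_edge_of_not_reachable hnreach
    convert this using 1
    rw [edge, ← fromEdgeSet_union]
    congr 1
    ext e
    simp

lemma HasLongPath.map {G' : SimpleGraph W} {ℓ : ℝ} (f : G →g G') (hf : Function.Injective f)
    (h : HasLongPath G ℓ) : HasLongPath G' ℓ := by
  obtain ⟨a, b, P, hP, hlen⟩ := h
  exact ⟨f a, f b, P.map f, hP.map hf, by rwa [Walk.length_map]⟩

lemma SimpleGraph.Iso.hasLongPath_iff {G' : SimpleGraph W} {ℓ : ℝ} (φ : G ≃g G') :
    HasLongPath G ℓ ↔ HasLongPath G' ℓ :=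
  ⟨.map φ.toHom φ.injective, .map φ.symm.toHom φ.symm.injective⟩

lemma SimpleGraph.ncard_setOf_isTree_hasLongPath_congr (e : V ≃ W) (ℓ : ℝ) :
    {T : SimpleGraph V | T.IsTree ∧ HasLongPath T ℓ}.ncard =
      {T : SimpleGraph W | T.IsTree ∧ HasLongPath T ℓ}.ncard := by
  refine Set.ncard_congr (fun T _ => e.simpleGraph T) ?_
    (fun _ _ _ _ h => e.simpleGraph.injective h) ?_
  · rintro T ⟨hT, hlong⟩
    have φ := (Iso.comap e.symm T).symm
    exact ⟨φ.isTree_iff.mp hT, φ.hasLongPath_iff.mp hlong⟩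
  · rintro T ⟨hT, hlong⟩
    have φ := Iso.comap e T
    exact ⟨e.symm.simpleGraph T, ⟨φ.isTree_iff.mpr hT, φ.hasLongPath_iff.mpr hlong⟩,
      e.simpleGraph.apply_symm_apply T⟩

lemma SimpleGraph.Connected.exists_isTree_le_hasLongPath (hG : G.Connected) {ℓ : ℝ}
    (h : HasLongPath G ℓ) : ∃ T ≤ G, T.IsTree ∧ HasLongPath T ℓ := by
  obtain ⟨a, b, P, hP, hlen⟩ := h
  have hPG : fromEdgeSet {e | e ∈ P.edges} ≤ G :=
    G.fromEdgeSet_le.mpr fun _ he => P.edges_subset_edgeSet he.1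
  obtain ⟨T, hPT, hTG, hT⟩ :=
    hG.exists_isTree_le_of_le_of_isAcyclic hPG hP.isAcyclic_fromEdgeSet_edges
  have hedges : ∀ e ∈ P.edges, e ∈ T.edgeSet := fun e he => edgeSet_mono hPT <| by
    rw [edgeSet_fromEdgeSet]
    exact ⟨he, G.not_isDiag_of_mem_edgeSet (P.edges_subset_edgeSet he)⟩
  exact ⟨T, hTG, hT, a, b, P.transfer T hedges, hP.transfer hedges,
    by rwa [Walk.length_transfer]⟩

end

lemma gnp_setOf_eq_true_eq_false {n : ℕ} {p : ℝ} (hp0 : 0 ≤ p) (hp1 : p ≤ 1)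
    {E F : Finset (Sym2 (Fin n))} (hEF : Disjoint E F) :
    gnp n p {ω | (∀ e ∈ E, ω e = true) ∧ ∀ e ∈ F, ω e = false} =
      ENNReal.ofReal p ^ #E * ENNReal.ofReal (1 - p) ^ #F := by
  set ν := (PMF.bernoulli (min (Real.toNNReal p) 1) (min_le_right _ _)).toMeasure
  have hq : ((min (Real.toNNReal p) 1 : NNReal) : ENNReal) = ENNReal.ofReal p := by
    rw [min_eq_left (Real.toNNReal_le_one.mpr hp1)]; rfl
  have hν (b : Bool) : ν {b} = cond b (ENNReal.ofReal p) (ENNReal.ofReal (1 - p)) := by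
    rw [PMF.toMeasure_apply_singleton _ _ (measurableSet_singleton _), PMF.bernoulli_apply]
    cases b <;> simp [hq, ENNReal.ofReal_sub, hp0]
  have hfactor (e : Sym2 (Fin n)) : ν {b | (e ∈ E → b = true) ∧ (e ∈ F → b = false)} =
      (if e ∈ E then ENNReal.ofReal p else 1) *
        (if e ∈ F then ENNReal.ofReal (1 - p) else 1) := by
    by_cases hE : e ∈ E
    · have hF : e ∉ F := disjoint_left.mp hEF hE
      simpa [hE, hF] using hν true
    by_cases hF : e ∈ F
    · simpa [hE, hF] using hν false
    · simp only [hE, hF, false_imp_iff, and_self, Set.ofPred_true, if_false, mul_one, measure_univ]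
  have hset : {ω : _ → Bool | (∀ e ∈ E, ω e = true) ∧ ∀ e ∈ F, ω e = false} =
      Set.univ.pi fun e => {b | (e ∈ E → b = true) ∧ (e ∈ F → b = false)} := by
    ext ω
    simp [forall_and]
  rw [hset, gnp, Measure.pi_pi, prod_congr rfl fun e _ => hfactor e, prod_mul_distrib,
    prod_ite_mem, prod_ite_mem, univ_inter, univ_inter, prod_const, prod_const]

section CrossEdges

variable {V : Type*} [Fintype V] [DecidableEq V]

def crossEdges (S : Finset V) : Finset (Sym2 V) :=
  (S ×ˢ Sᶜ).image fun q => s(q.1, q.2)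

lemma card_crossEdges (S : Finset V) : #(crossEdges S) = #S * (Fintype.card V - #S) := by
  rw [crossEdges, card_image_of_injOn, card_product, card_compl]
  rintro ⟨v, w⟩ hvw ⟨v', w'⟩ hvw' h
  simp only [coe_product, Set.mem_prod, mem_coe, mem_compl] at hvw hvw'
  rcases Sym2.eq_iff.mp h with ⟨rfl, rfl⟩ | ⟨rfl, rfl⟩
  · rfl
  · exact absurd hvw.1 hvw'.2

lemma disjoint_edgeFinset_crossEdges {S : Finset V} {H : SimpleGraph V} [Fintype H.edgeSet]
    (hH : ∀ v w, H.Adj v w → v ∈ S → w ∈ S) : Disjoint H.edgeFinset (crossEdges S) := by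
  simp only [Finset.disjoint_left, crossEdges, mem_image, mem_product, mem_compl,
    mem_edgeFinset]
  rintro _ he ⟨⟨v, w⟩, ⟨hv, hw⟩, rfl⟩
  exact hw (hH v w he hv)

end CrossEdges

section RandomGraph

variable {n : ℕ}

lemma le_graphOf_iff {H : SimpleGraph (Fin n)} {ω : Sym2 (Fin n) → Bool} :
    H ≤ graphOf ω ↔ ∀ e ∈ H.edgeSet, ω e = true := by
  refine ⟨fun h e he => ?_, fun h v w hvw => ⟨hvw.ne, h _ hvw⟩⟩
  induction e using Sym2.ind
  exact (h he).2

lemma isolated_graphOf_iff {S : Finset (Fin n)} {ω : Sym2 (Fin n) → Bool} :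
    (∀ v w, v ∈ S → w ∉ S → ¬ (graphOf ω).Adj v w) ↔
      ∀ e ∈ crossEdges S, ω e = false := by
  simp only [crossEdges, forall_mem_image, mem_product, mem_compl, and_imp, Prod.forall]
  refine forall₄_congr fun v w hv hw => ?_
  simp [graphOf, ne_of_mem_of_not_mem hv hw]

def edgesPresentAndIsolated (S : Finset (Fin n)) (T : SimpleGraph (↑S : Set (Fin n))) :
    Set (Sym2 (Fin n) → Bool) :=
  {ω | T.map (Function.Embedding.subtype _) ≤ graphOf ω ∧
    ∀ v w, v ∈ S → w ∉ S → ¬ (graphOf ω).Adj v w}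

lemma gnp_edgesPresentAndIsolated {p : ℝ} (hp0 : 0 ≤ p) (hp1 : p ≤ 1) {S : Finset (Fin n)}
    {T : SimpleGraph (↑S : Set (Fin n))} (hT : T.IsTree) :
    gnp n p (edgesPresentAndIsolated S T) =
      ENNReal.ofReal p ^ (#S - 1) * ENNReal.ofReal (1 - p) ^ (#S * (n - #S)) := by
  classical
  have hevent : edgesPresentAndIsolated S T =
      {ω | (∀ e ∈ (T.map (Function.Embedding.subtype _)).edgeFinset, ω e = true) ∧
        ∀ e ∈ crossEdges S, ω e = false} := by
    ext ω
    simp only [edgesPresentAndIsolated, le_graphOf_iff, isolated_graphOf_iff, mem_edgeFinset]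
  have hcard : #T.edgeFinset + 1 = #S := by simpa using hT.card_edgeFinset
  rw [hevent, gnp_setOf_eq_true_eq_false hp0 hp1 (disjoint_edgeFinset_crossEdges ?_),
    card_edgeFinset_map, card_crossEdges, Fintype.card_fin, ← hcard, Nat.add_sub_cancel]
  rintro v w ⟨-, v', w', -, rfl, rfl⟩
  exact fun _ => w'.2

end RandomGraph

lemma pTree_mul_pow (t : ℕ) (ℓ : ℝ) :
    pTree t ℓ * (t : ℝ) ^ (t - 2) =
      {T : SimpleGraph (Fin t) | T.IsTree ∧ HasLongPath T ℓ}.ncard := by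
  have hpow : (t : ℝ) ^ (t - 2) ≠ 0 := by
    rcases Nat.eq_zero_or_pos t with rfl | ht
    · simp
    · exact pow_ne_zero _ (by positivity)
  exact div_mul_cancel₀ _ hpow

theorem isolated_component_with_long_path_prob_general (n : ℕ) (p : ℝ) (hp0 : 0 ≤ p) (hp1 : p ≤ 1)
    (S : Finset (Fin n)) (t : ℕ) (hS : S.card = t) (ℓ : ℝ) :
    gnp n p {ω |
        (SimpleGraph.induce (↑S : Set (Fin n)) (graphOf ω)).Connected ∧
        HasLongPath (SimpleGraph.induce (↑S : Set (Fin n)) (graphOf ω)) ℓ ∧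
        ∀ v w : Fin n, v ∈ S → w ∉ S → ¬ (graphOf ω).Adj v w}
      ≤ ENNReal.ofReal
          (pTree t ℓ * (t : ℝ) ^ (t - 2) * p ^ (t - 1) * (1 - p) ^ (t * (n - t))) := by
  classical
  subst hS
  let 𝒯 : Finset (SimpleGraph (↑S : Set (Fin n))) := {T | T.IsTree ∧ HasLongPath T ℓ}
  have hcard : (#𝒯 : ℝ) = pTree #S ℓ * (#S : ℝ) ^ (#S - 2) := by
    have hcardS : Fintype.card (↑S : Set (Fin n)) = #S := by simp
    rw [pTree_mul_pow, ← ncard_setOf_isTree_hasLongPath_congr (Fintype.equivFinOfCardEq hcardS),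
      ← Set.ncard_coe_finset, coe_filter_univ]
  calc _ ≤ gnp n p (⋃ T ∈ 𝒯, edgesPresentAndIsolated S T) := by
        refine measure_mono fun ω ⟨hconn, hlong, hiso⟩ => ?_
        obtain ⟨T, hTG, hT, hTlong⟩ := hconn.exists_isTree_le_hasLongPath hlong
        exact Set.mem_biUnion (by simp [𝒯, hT, hTlong])
          ⟨(map_le_iff_le_comap _ _ _).mpr hTG, hiso⟩
    _ ≤ ∑ T ∈ 𝒯, gnp n p (edgesPresentAndIsolated S T) := measure_biUnion_finset_le _ _
    _ = #𝒯 * (ENNReal.ofReal p ^ (#S - 1) * ENNReal.ofReal (1 - p) ^ (#S * (n - #S))) := by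
      rw [sum_congr rfl fun T hT => gnp_edgesPresentAndIsolated hp0 hp1 (mem_filter.mp hT).2.1,
        sum_const, nsmul_eq_mul]
    _ = _ := by
      rw [← hcard, mul_assoc, ENNReal.ofReal_mul (by positivity), ENNReal.ofReal_natCast,
        ENNReal.ofReal_mul (by positivity), ENNReal.ofReal_pow hp0,
        ENNReal.ofReal_pow (sub_nonneg.mpr hp1)]

/-- **Lemma (probability of an isolated small component with a long path).** For a fixed
set `S ⊆ [n]` of size `t` and `ℓ ≥ 1`, the probability that `G[S]` is connected, contains
a path of length at least `ℓ`, and there are no edges of `G` between `S` and `[n] \ S`, is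
at most `p_{t,ℓ} · t^{t−2} · p^{t−1} · (1−p)^{t(n−t)}`. -/
theorem isolated_component_with_long_path_prob (n : ℕ) (p : ℝ) (hp0 : 0 ≤ p) (hp1 : p ≤ 1)
    (S : Finset (Fin n)) (t : ℕ) (hS : S.card = t) (ℓ : ℝ) (hℓ : 1 ≤ ℓ) :
    gnp n p {ω |
        (SimpleGraph.induce (↑S : Set (Fin n)) (graphOf ω)).Connected ∧
        HasLongPath (SimpleGraph.induce (↑S : Set (Fin n)) (graphOf ω)) ℓ ∧
        ∀ v w : Fin n, v ∈ S → w ∉ S → ¬ (graphOf ω).Adj v w}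
      ≤ ENNReal.ofReal
          (pTree t ℓ * (t : ℝ) ^ (t - 2) * p ^ (t - 1) * (1 - p) ^ (t * (n - t))) :=
  isolated_component_with_long_path_prob_general n p hp0 hp1 S t hS ℓ
end

section
/- Let G be a connected graph, let K be the 2-core of G, and let F be the graph obtained from G by removing the edges of K. Then for every ℓ ≥ 1, the maximum number of vertices covered by pairwise vertex-disjoint paths of length at least ℓ in G is at most 6·|V(K)| + 6·Z, where Z is the maximum number of vertices covered by pairwise vertex-disjoint paths of length at least ℓ/3 in F. -/
/-- The subgraph of `G` induced by a vertex set `s` (as a graph on the same vertex type). -/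
def inducedOn {V : Type*} (G : SimpleGraph V) (s : Set V) : SimpleGraph V where
  Adj x y := G.Adj x y ∧ x ∈ s ∧ y ∈ s
  symm := ⟨fun _ _ ⟨h, hx, hy⟩ => ⟨h.symm, hy, hx⟩⟩
  loopless := ⟨fun x ⟨h, _, _⟩ => G.loopless.irrefl x h⟩

/-- The vertex set of the 2-core of `G`: the union of all vertex sets `S` such that every
vertex of `S` has at least two neighbours inside `S`.  -/
def twoCoreSet {V : Type*} (G : SimpleGraph V) : Set V :=
  ⋃₀ {S : Set V | ∀ v ∈ S, 2 ≤ (S ∩ G.neighborSet v).ncard}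

/-- The graph obtained from `G` by removing all edges with both endpoints in `K`
(when `K` is the vertex set of the 2-core, these are exactly the edges of the 2-core). -/
def removeCoreEdges {V : Type*} (G : SimpleGraph V) (K : Set V) : SimpleGraph V where
  Adj x y := G.Adj x y ∧ ¬(x ∈ K ∧ y ∈ K)
  symm := ⟨fun _ _ ⟨h, hk⟩ => ⟨h.symm, fun ⟨hy, hx⟩ => hk ⟨hx, hy⟩⟩⟩
  loopless := ⟨fun x ⟨h, _⟩ => G.loopless.irrefl x h⟩

/-!
Along a path of `G` the vertices of the 2-core form one contiguous block, since a path joining two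
core vertices can be added to the core. What remains is a prefix and a suffix, both paths of `F`,
and the suffix is empty when the path misses the core. Keep the pieces with at least `ℓ / 3`
edges. A dropped piece has at most `(ℓ + 2) / 3` vertices while the path has more than `ℓ`, so the
path has at most six times as many vertices as its core block and its kept pieces together.
The core blocks of disjoint paths are disjoint, and summing gives the bound.
-/

open Finset SimpleGraph

section TwoCore

variable {V : Type*} [Finite V] {G : SimpleGraph V}

lemma two_le_ncard_twoCoreSet_inter_neighborSet {v : V} (hv : v ∈ twoCoreSet G) :
    2 ≤ (twoCoreSet G ∩ G.neighborSet v).ncard := by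
  obtain ⟨S, hS, hvS⟩ := hv
  exact (hS v hvS).trans <|
    Set.ncard_le_ncard (Set.inter_subset_inter_left _ (Set.subset_sUnion_of_mem hS))

lemma subset_twoCoreSet {T : Set V}
    (hT : ∀ v ∈ T, v ∈ twoCoreSet G ∨ 2 ≤ (T ∩ G.neighborSet v).ncard) :
    T ⊆ twoCoreSet G := by
  have hcore {v : V} (hv : v ∈ twoCoreSet G) : 2 ≤ ((twoCoreSet G ∪ T) ∩ G.neighborSet v).ncard :=
    (two_le_ncard_twoCoreSet_inter_neighborSet hv).trans <|
      Set.ncard_le_ncard (Set.inter_subset_inter_left _ Set.subset_union_left)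
  have hunion : twoCoreSet G ∪ T ∈ {S : Set V | ∀ v ∈ S, 2 ≤ (S ∩ G.neighborSet v).ncard} := by
    rintro v (hv | hv)
    · exact hcore hv
    · exact (hT v hv).elim hcore fun h =>
        h.trans (Set.ncard_le_ncard (Set.inter_subset_inter_left _ Set.subset_union_right))
  exact Set.subset_union_right.trans (Set.subset_sUnion_of_mem hunion)

/-- Every inner vertex of the path has two neighbours on it, so the path can be added to the
core. -/
lemma forall_mem_twoCoreSet_of_isChain {l : List V} (hc : l.IsChain G.Adj) (hn : l.Nodup)
    (hne : l ≠ []) (hhead : l.head hne ∈ twoCoreSet G) (hlast : l.getLast hne ∈ twoCoreSet G) :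
    ∀ x ∈ l, x ∈ twoCoreSet G := by
  refine subset_twoCoreSet (T := {x | x ∈ l}) fun x hx => ?_
  obtain ⟨i, hi, rfl⟩ := List.mem_iff_getElem.mp hx
  rw [List.head_eq_getElem] at hhead
  rw [List.getLast_eq_getElem] at hlast
  rcases i with _ | j
  · exact Or.inl hhead
  by_cases hjl : j + 2 = l.length
  · exact Or.inl (by simpa [← hjl] using hlast)
  right
  have hadj := List.isChain_iff_getElem.mp hc
  have hne' : l[j] ≠ l[j + 2] := by rw [Ne, hn.getElem_inj_iff]; omega
  calc 2 = ({l[j], l[j + 2]} : Set V).ncard := (Set.ncard_pair hne').symm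
    _ ≤ _ := Set.ncard_le_ncard <|
      Set.insert_subset (Set.mem_inter (List.getElem_mem _) (hadj j hi).symm) <|
        Set.singleton_subset_iff.mpr (Set.mem_inter (List.getElem_mem _) (hadj (j + 1) (by omega)))

lemma exists_split_twoCoreSet {l : List V} (hc : l.IsChain G.Adj) (hn : l.Nodup) :
    ∃ p c q : List V, l = p ++ c ++ q ∧ (∀ v ∈ p, v ∉ twoCoreSet G) ∧
      (∀ v ∈ c, v ∈ twoCoreSet G) ∧ (∀ v ∈ q, v ∉ twoCoreSet G) ∧ (c = [] → q = []) := by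
  classical
  let out : V → Bool := fun v => decide (v ∉ twoCoreSet G)
  set r := l.dropWhile out
  set c := (r.reverse.dropWhile out).reverse
  set q := (r.reverse.takeWhile out).reverse
  have hr : r = c ++ q := by
    simp only [c, q, ← List.reverse_append, List.takeWhile_append_dropWhile, List.reverse_reverse]
  have hr_head (hne : r ≠ []) : r.head hne ∈ twoCoreSet G := by
    have h := List.head_dropWhile_not out hne
    simp only [out, decide_eq_false_iff_not, not_not] at h
    exact h
  have hq : ∀ v ∈ q, v ∉ twoCoreSet G := fun v hv => by
    simpa [out] using List.mem_takeWhile_imp (List.mem_reverse.mp hv)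
  refine ⟨l.takeWhile out, c, q, ?_, fun v hv => by simpa [out] using List.mem_takeWhile_imp hv,
    fun v hv => ?_, hq, fun hc0 => ?_⟩
  · rw [List.append_assoc, ← hr, List.takeWhile_append_dropWhile]
  · have hcne : c ≠ [] := List.ne_nil_of_mem hv
    have hinfix : c <:+: l :=
      ⟨l.takeWhile out, q, by rw [List.append_assoc, ← hr, List.takeWhile_append_dropWhile]⟩
    refine forall_mem_twoCoreSet_of_isChain (hc.infix hinfix) (hn.sublist hinfix.sublist) hcne
      ?_ ?_ v hv
    · rw [List.IsPrefix.head ⟨q, hr.symm⟩ hcne]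
      exact hr_head _
    · rw [List.getLast_reverse]
      simpa [out] using List.head_dropWhile_not out (List.reverse_ne_nil_iff.mp hcne)
  · by_contra hqne
    rw [hc0, List.nil_append] at hr
    exact hq _ (List.head_mem hqne) (by simpa only [hr] using hr_head (hr ▸ hqne))

end TwoCore

lemma List.IsChain.removeCoreEdges {V : Type*} {G : SimpleGraph V} {K : Set V} {l : List V}
    (hc : l.IsChain G.Adj) (hK : ∀ v ∈ l, v ∉ K) : l.IsChain (removeCoreEdges G K).Adj :=
  hc.imp_of_mem_imp fun u _ hu _ huv => ⟨huv, fun h => hK u hu h.1⟩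

lemma disjointPathsCover_of_lists {V ι : Type*} (H : SimpleGraph V) (ℓ : ℝ) (s : Finset ι)
    (L : ι → List V) (hne : ∀ i ∈ s, L i ≠ []) (hchain : ∀ i ∈ s, (L i).IsChain H.Adj)
    (hnodup : ∀ i ∈ s, (L i).Nodup) (hlen : ∀ i ∈ s, ℓ + 1 ≤ ((L i).length : ℝ))
    (hdisj : ∀ i ∈ s, ∀ j ∈ s, i ≠ j → (L i).Disjoint (L j)) :
    DisjointPathsCover H ℓ (∑ i ∈ s, (L i).length : ℕ) := by
  let e := s.equivFin.symm
  refine ⟨s.card, _, _, fun j => Walk.ofSupport (L (e j)) (hne _ (e j).2) (hchain _ (e j).2),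
    fun j => ?_, fun j => ?_, fun j j' hjj' x => ?_, ?_⟩
  · rw [Walk.isPath_def, Walk.support_ofSupport]
    exact hnodup _ (e j).2
  · have := hlen _ (e j).2
    have := List.length_pos_of_ne_nil (hne _ (e j).2)
    rw [Walk.length_ofSupport, Nat.cast_sub (by omega)]
    push_cast
    linarith
  · simp only [Walk.support_ofSupport]
    exact fun hx => hdisj _ (e j).2 _ (e j').2 (Subtype.val_injective.ne (e.injective.ne hjj')) hx
  · simp only [Walk.support_ofSupport]
    push_cast
    exact ((Finset.sum_coe_sort s _).symm.trans (e.sum_comp _).symm).le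

lemma sum_length_le_ncard {α ι : Type*} [Finite α] [Fintype ι] {S : Set α} (L : ι → List α)
    (hn : ∀ i, (L i).Nodup) (hdisj : Pairwise fun i j => (L i).Disjoint (L j))
    (hS : ∀ i, ∀ v ∈ L i, v ∈ S) : ∑ i, (L i).length ≤ S.ncard := by
  classical
  calc ∑ i, (L i).length = ∑ i, (L i).toFinset.card := by
        simp only [List.toFinset_card_of_nodup (hn _)]
    _ = (univ.biUnion fun i => (L i).toFinset).card :=
        (card_biUnion fun i _ j _ hij => List.disjoint_toFinset_iff_disjoint.mpr (hdisj hij)).symm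
    _ ≤ S.ncard := by
        rw [← Set.ncard_coe_finset]
        exact Set.ncard_le_ncard fun v hv => by
          obtain ⟨i, -, hv⟩ := mem_biUnion.mp hv
          exact hS i v (List.mem_toFinset.mp hv)

/-- `ℓ + 3 ≤ 3 * n` says that a path on `n` vertices has at least `ℓ / 3` edges. -/
lemma length_le_six_mul_add_long (ℓ p c q : ℕ) (hℓ : ℓ + 1 ≤ p + c + q) (hcq : c = 0 → q = 0) :
    p + c + q ≤ 6 * c +
      6 * ((if ℓ + 3 ≤ 3 * p then p else 0) + (if ℓ + 3 ≤ 3 * q then q else 0)) := by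
  split_ifs <;> omega

section Split

variable {α ι : Type*} {L p c q : ι → List α}

lemma sumElim_infix_of_split (hsplit : ∀ i, L i = p i ++ c i ++ q i) (x : ι ⊕ ι) :
    Sum.elim p q x <:+: L (Sum.elim id id x) := by
  rcases x with i | i
  · exact ⟨[], c i ++ q i, by simp [hsplit i]⟩
  · exact ⟨p i ++ c i, [], by simp [hsplit i]⟩

lemma pairwise_disjoint_sumElim_of_split (hsplit : ∀ i, L i = p i ++ c i ++ q i)
    (hn : ∀ i, (L i).Nodup) (hdisj : Pairwise fun i j => (L i).Disjoint (L j)) :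
    Pairwise fun x y => (Sum.elim p q x).Disjoint (Sum.elim p q y) := by
  have hpq (i : ι) : (p i).Disjoint (q i) :=
    List.disjoint_of_nodup_append <| (hn i).sublist <| by simp [hsplit]
  intro x y hxy
  by_cases hxy' : Sum.elim id id x = Sum.elim id id y
  · rcases x with i | i <;> rcases y with j | j <;> simp only [Sum.elim_inl, Sum.elim_inr, id,
      Sum.inl.injEq, Sum.inr.injEq, ne_eq] at hxy hxy' ⊢
    all_goals subst hxy'
    · exact absurd rfl hxy
    · exact hpq i
    · exact (hpq i).symm
    · exact absurd rfl hxy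
  · exact List.disjoint_of_subset_left (sumElim_infix_of_split hsplit x).subset <|
      List.disjoint_of_subset_right (sumElim_infix_of_split hsplit y).subset (hdisj hxy')

lemma sum_length_le_of_split [Fintype ι] (ℓ : ℕ)
    (hsplit : ∀ i, L i = p i ++ c i ++ q i) (hlen : ∀ i, ℓ + 1 ≤ (L i).length)
    (hcq : ∀ i, c i = [] → q i = []) :
    ∑ i, (L i).length ≤ 6 * ∑ i, (c i).length +
      6 * ∑ x with ℓ + 3 ≤ 3 * (Sum.elim p q x).length, (Sum.elim p q x).length := by
  rw [sum_filter, Fintype.sum_sum_type, ← sum_add_distrib, mul_sum, mul_sum, ← sum_add_distrib]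
  refine sum_le_sum fun i _ => ?_
  have hL : (L i).length = (p i).length + (c i).length + (q i).length := by
    simp [hsplit i, Nat.add_assoc]
  simp only [Sum.elim_inl, Sum.elim_inr, hL]
  exact length_le_six_mul_add_long ℓ _ _ _ (hL ▸ hlen i) fun h => by
    simp [hcq i (List.length_eq_zero_iff.mp h)]

lemma disjointPathsCover_removeCoreEdges_of_split [Fintype ι] {G : SimpleGraph α} {K : Set α}
    (ℓ : ℕ) (hsplit : ∀ i, L i = p i ++ c i ++ q i) (hchain : ∀ i, (L i).IsChain G.Adj)
    (hn : ∀ i, (L i).Nodup) (hdisj : Pairwise fun i j => (L i).Disjoint (L j))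
    (hp : ∀ i, ∀ v ∈ p i, v ∉ K) (hq : ∀ i, ∀ v ∈ q i, v ∉ K) :
    DisjointPathsCover (removeCoreEdges G K) ((ℓ : ℝ) / 3)
      (∑ x with ℓ + 3 ≤ 3 * (Sum.elim p q x).length, (Sum.elim p q x).length : ℕ) := by
  have hlong {x} (hx : x ∈ ({x | ℓ + 3 ≤ 3 * (Sum.elim p q x).length} : Finset (ι ⊕ ι))) :
      ℓ + 3 ≤ 3 * (Sum.elim p q x).length :=
    (mem_filter.mp hx).2
  have hpq : ∀ x, ∀ v ∈ Sum.elim p q x, v ∉ K := by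
    rintro (i | i)
    exacts [hp i, hq i]
  refine disjointPathsCover_of_lists _ _ _ _
    (fun x hx => List.ne_nil_of_length_pos (by have := hlong hx; omega))
    (fun x _ => ((hchain _).infix (sumElim_infix_of_split hsplit x)).removeCoreEdges (hpq x))
    (fun x _ => (hn _).sublist (sumElim_infix_of_split hsplit x).sublist)
    (fun x hx => by
      have : (ℓ : ℝ) + 3 ≤ 3 * (Sum.elim p q x).length := by exact_mod_cast hlong hx
      linarith)
    (fun x _ y _ hxy => pairwise_disjoint_sumElim_of_split hsplit hn hdisj hxy)

end Split

theorem paths_bounded_by_core_and_forest_general {V : Type*} [Fintype V] (G : SimpleGraph V)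
    (ℓ : ℕ) (m : ℕ)
    (hm : DisjointPathsCover G (ℓ : ℝ) (m : ℝ)) :
    ∃ z : ℕ,
      DisjointPathsCover (removeCoreEdges G (twoCoreSet G)) ((ℓ : ℝ) / 3) (z : ℝ) ∧
      (m : ℝ) ≤ 6 * ((twoCoreSet G).ncard : ℝ) + 6 * (z : ℝ) := by
  classical
  obtain ⟨k, _, _, P, hpath, hlen, hdisj, hsum⟩ := hm
  choose p c q hsplit hp hc hq hcq using fun i =>
    exists_split_twoCoreSet (P i).isChain_adj_support (hpath i).support_nodup
  have hnodup i := (hpath i).support_nodup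
  have hdisj' : Pairwise fun i j => (P i).support.Disjoint (P j).support :=
    fun i j hij x => hdisj i j hij x
  refine ⟨_, disjointPathsCover_removeCoreEdges_of_split ℓ hsplit
    (fun i => (P i).isChain_adj_support) hnodup hdisj' hp hq, ?_⟩
  have hcore : ∑ i, (c i).length ≤ (twoCoreSet G).ncard :=
    sum_length_le_ncard c (fun i => (hnodup i).sublist (by simp [hsplit i]))
      (fun i j hij => List.disjoint_of_subset_left (by simp [hsplit i]) <|
        List.disjoint_of_subset_right (by simp [hsplit j]) (hdisj' hij)) hc
  have hcount := sum_length_le_of_split ℓ hsplit (fun i => by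
    have : ℓ ≤ (P i).length := by exact_mod_cast hlen i
    rw [Walk.length_support]; omega) hcq
  calc (m : ℝ) ≤ ∑ i, ((P i).support.length : ℝ) := hsum
    _ ≤ _ := by exact_mod_cast hcount.trans (by omega)

/-- **Lemma (paths versus the 2-core).** Let `G` be a connected (finite) graph, `K` its
2-core and `F` the graph obtained from `G` by removing the edges of `K`.  For every
`ℓ ≥ 1`, if a collection of pairwise vertex-disjoint paths of length at least `ℓ` covers
`m` vertices of `G`, then `m ≤ 6|V(K)| + 6Z`, where `Z` is realised by a collection of
pairwise vertex-disjoint paths of length at least `ℓ/3` in `F`. -/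
theorem paths_bounded_by_core_and_forest {V : Type*} [Fintype V] (G : SimpleGraph V)
    (hG : G.Connected) (ℓ : ℕ) (hℓ : 1 ≤ ℓ) (m : ℕ)
    (hm : DisjointPathsCover G (ℓ : ℝ) (m : ℝ)) :
    ∃ z : ℕ,
      DisjointPathsCover (removeCoreEdges G (twoCoreSet G)) ((ℓ : ℝ) / 3) (z : ℝ) ∧
      (m : ℝ) ≤ 6 * ((twoCoreSet G).ncard : ℝ) + 6 * (z : ℝ) :=
  paths_bounded_by_core_and_forest_general G ℓ m hm
end
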